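/- arXiv:2205.07105 — 3 statements merged into one kernel-verified Lean document; each statement's English description precedes it below -/
import Mathlib

section
/- Let X be a 0-dimensional space and let P, K be compact subsets of X × ℕ^ℕ. If f : P → K is a homeomorphism and g is an autohomeomorphism of X such that g ∘ π_X = π_X ∘ f (where π_X : X × ℕ^ℕ → X is the projection), then f can be extended to a homeomorphism f̃ of X × ℕ^ℕ onto itself such that g ∘ π_X = π_X ∘ f̃. -/
open Topology Set TopologicalSpace

/-!
Klee's trick. Choose a homeomorphism `k : ℕ^ℕ ≃ₜ ℤ^ℕ × ℤ^ℕ` that is `z ↦ (z, 0)` on the compact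
set of fibre coordinates of `P ∪ K`: that set lies in a box `∏ [0, a n]`, and coordinatewise any
bijection `ℕ ≃ ℤ × ℤ` with `m ↦ (m, 0)` for `m ≤ a n` will do. As `X × ℕ^ℕ` has a basis of
clopen sets, the fibre coordinates of `f` and `f⁻¹` extend to continuous maps
`Φ, Ψ : X × ℕ^ℕ → ℤ^ℕ`. In the coordinates given by `k`, the homeomorphism
`(x, y, w) ↦ (g x, w + Φ (x, y), y - Ψ (g x, w + Φ (x, y)))` lies over `g` and sends `(x, y, 0)`
to `f (x, y)` for `(x, y) ∈ P`.
-/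

universe u

/-- A space is *0-dimensional* if it admits a dense topological embedding into a
compact Hausdorff totally disconnected space (a compactification of covering dimension 0). -/
def ZeroDimensional (Y : Type u) [TopologicalSpace Y] : Prop :=
  ∃ (Z : Type u) (_ : TopologicalSpace Z), CompactSpace Z ∧ T2Space Z ∧
    TotallyDisconnectedSpace Z ∧ ∃ e : Y → Z, Topology.IsEmbedding e ∧ DenseRange e

section ClopenBasis

variable {α β : Type*} [TopologicalSpace α] [TopologicalSpace β]

theorem Topology.IsInducing.isTopologicalBasis_isClopen {f : α → β} (hf : IsInducing f)
    (h : IsTopologicalBasis {s : Set β | IsClopen s}) :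
    IsTopologicalBasis {s : Set α | IsClopen s} := by
  refine (h.isInducing hf).of_isOpen_of_subset (fun _ hs => hs.isOpen) ?_
  rintro _ ⟨s, hs, rfl⟩
  exact hs.preimage hf.continuous

theorem TopologicalSpace.IsTopologicalBasis.prod_isClopen
    (hα : IsTopologicalBasis {s : Set α | IsClopen s})
    (hβ : IsTopologicalBasis {s : Set β | IsClopen s}) :
    IsTopologicalBasis {s : Set (α × β) | IsClopen s} := by
  refine (hα.prod hβ).of_isOpen_of_subset (fun _ hs => hs.isOpen) ?_
  rintro _ ⟨s, hs, t, ht, rfl⟩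
  exact hs.prod ht

theorem ZeroDimensional.isTopologicalBasis_isClopen {Y : Type u} [TopologicalSpace Y]
    (hY : ZeroDimensional Y) : IsTopologicalBasis {s : Set Y | IsClopen s} := by
  obtain ⟨Z, _, _, _, _, e, he, -⟩ := hY
  exact he.isInducing.isTopologicalBasis_isClopen _root_.isTopologicalBasis_isClopen

end ClopenBasis

section Extension

variable {W D : Type*} [TopologicalSpace W] [TopologicalSpace D] [DiscreteTopology D] [Nonempty D]

theorem exists_continuous_extension_of_isCompact
    (hW : IsTopologicalBasis {s : Set W | IsClopen s}) {C : Set W} (hC : IsCompact C)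
    (u : C → D) (hu : Continuous u) :
    ∃ U : W → D, Continuous U ∧ ∀ c : C, U c = u c := by
  classical
  have hV : ∀ c : C, ∃ V : Set W,
      IsClopen V ∧ (c : W) ∈ V ∧ ∀ c' : C, (c' : W) ∈ V → u c' = u c := by
    intro c
    obtain ⟨O, hO, hOu⟩ := isOpen_induced_iff.mp ((isOpen_discrete {u c}).preimage hu)
    have hO' : ∀ c' : C, (c' : W) ∈ O ↔ u c' = u c := fun c' => Set.ext_iff.mp hOu c'
    obtain ⟨V, hV, hcV, hVO⟩ := hW.exists_subset_of_mem_open ((hO' c).mpr rfl) hO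
    exact ⟨V, hV, hcV, fun c' hc' => (hO' c').mp (hVO hc')⟩
  choose V hVc hcV hVu using hV
  obtain ⟨t, ht⟩ := hC.elim_finite_subcover (fun c => V c) (fun c => (hVc c).isOpen)
    fun c hc => mem_iUnion.mpr ⟨⟨c, hc⟩, hcV _⟩
  -- The `V d` need not be disjoint, but `u` is constant on `C ∩ V d`,
  -- so later pieces may override earlier ones.
  suffices ∀ s : Finset C, ∃ U : W → D, Continuous U ∧
      ∀ c : C, (∃ d ∈ s, (c : W) ∈ V d) → U c = u c by
    obtain ⟨U, hU, hUu⟩ := this t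
    exact ⟨U, hU, fun c => hUu c (by simpa using ht c.2)⟩
  intro s
  induction s using Finset.induction_on with
  | empty => exact ⟨fun _ => Classical.arbitrary D, continuous_const, by simp⟩
  | insert d s _ ih =>
    obtain ⟨U, hU, hUu⟩ := ih
    refine ⟨(V d).piecewise (fun _ => u d) U,
      continuous_const.piecewise (by simp [(hVc d).frontier_eq]) hU, fun c hc => ?_⟩
    by_cases hcd : (c : W) ∈ V d
    · rw [piecewise_eq_of_mem _ _ _ hcd, hVu d c hcd]
    · rw [piecewise_eq_of_notMem _ _ _ hcd]
      obtain ⟨e, he, hce⟩ := hc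
      rcases Finset.mem_insert.mp he with rfl | he
      · exact absurd hce hcd
      · exact hUu c ⟨e, he, hce⟩

theorem exists_continuous_pi_extension_of_isCompact {ι : Type*}
    (hW : IsTopologicalBasis {s : Set W | IsClopen s}) {C : Set W} (hC : IsCompact C)
    (u : C → ι → D) (hu : Continuous u) : ∃ U : W → ι → D, Continuous U ∧ ∀ c : C, U c = u c := by
  choose U hU hUu using fun i =>
    exists_continuous_extension_of_isCompact hW hC (fun c => u c i) (by fun_prop)
  exact ⟨fun w i => U i w, continuous_pi hU, fun c => funext fun i => hUu i c⟩

end Extension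

section Splitting

theorem exists_forall_apply_le_of_isCompact {ι : Type*} {s : Set (ι → ℕ)} (hs : IsCompact s) :
    ∃ a : ι → ℕ, ∀ z ∈ s, ∀ i, z i ≤ a i := by
  choose a ha using fun i => (hs.image (continuous_apply i)).bddAbove
  exact ⟨a, fun z hz i => ha i (mem_image_of_mem _ hz)⟩

theorem exists_equiv_int_prod_eq_cast_zero (c : ℕ) :
    ∃ e : ℕ ≃ ℤ × ℤ, ∀ m ≤ c, e m = ((m : ℤ), 0) := by
  let f : (Iic c : Set ℕ) ↪ ℤ × ℤ :=
    ⟨fun m => ((m : ℕ), 0), fun m m' h => Subtype.ext (by simpa using h)⟩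
  obtain ⟨e, he⟩ := Cardinal.extend_function_of_lt f
    ((Cardinal.lt_aleph0_of_finite _).trans_eq Cardinal.mk_nat.symm)
    ⟨(Denumerable.eqv (ℤ × ℤ)).symm⟩
  exact ⟨e, fun m hm => he ⟨m, hm⟩⟩

theorem exists_homeomorph_eq_cast_zero_of_isCompact {s : Set (ℕ → ℕ)} (hs : IsCompact s) :
    ∃ k : (ℕ → ℕ) ≃ₜ (ℕ → ℤ) × (ℕ → ℤ), ∀ z ∈ s, k z = (fun n => (z n : ℤ), 0) := by
  obtain ⟨a, ha⟩ := exists_forall_apply_le_of_isCompact hs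
  choose e he using fun n => exists_equiv_int_prod_eq_cast_zero (a n)
  let k : (ℕ → ℕ) ≃ₜ (ℕ → ℤ) × (ℕ → ℤ) :=
    { toFun z := (fun n => (e n (z n)).1, fun n => (e n (z n)).2)
      invFun y n := (e n).symm (y.1 n, y.2 n)
      left_inv z := by simp
      right_inv y := by simp
      continuous_toFun := by fun_prop
      continuous_invFun := by fun_prop }
  refine ⟨k, fun z hz => Prod.ext (funext fun n => ?_) (funext fun n => ?_)⟩ <;>
    simp [k, he n _ (ha z hz n)]

end Splitting

section Klee

variable {X G : Type*} [TopologicalSpace X] [AddGroup G] [TopologicalSpace G]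
  [IsTopologicalAddGroup G]

def kleeHomeomorph (g : X ≃ₜ X) (Φ Ψ : X × G → G) (hΦ : Continuous Φ) (hΨ : Continuous Ψ) :
    X × (G × G) ≃ₜ X × (G × G) where
  toFun w := (g w.1, (w.2.2 + Φ (w.1, w.2.1), w.2.1 - Ψ (g w.1, w.2.2 + Φ (w.1, w.2.1))))
  invFun w :=
    (g.symm w.1, (w.2.2 + Ψ (w.1, w.2.1), w.2.1 - Φ (g.symm w.1, w.2.2 + Ψ (w.1, w.2.1))))
  left_inv w := by simp
  right_inv w := by simp
  continuous_toFun := by fun_prop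
  continuous_invFun := by fun_prop

theorem kleeHomeomorph_apply_zero (g : X ≃ₜ X) {Φ Ψ : X × G → G} (hΦ : Continuous Φ)
    (hΨ : Continuous Ψ) {x : X} {y : G} (h : Ψ (g x, Φ (x, y)) = y) :
    kleeHomeomorph g Φ Ψ hΦ hΨ (x, (y, 0)) = (g x, (Φ (x, y), 0)) := by
  simp [kleeHomeomorph, h]

theorem exists_homeomorph_extension_of_splitting {Y : Type*} [TopologicalSpace Y]
    {P K : Set (X × Y)} (f : P ≃ₜ K) (g : X ≃ₜ X)
    (hfg : ∀ p : P, g (p : X × Y).1 = (f p : X × Y).1)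
    (k : Y ≃ₜ G × G) {j : Y → G} {r : G → Y} (hr : Continuous r) (hrj : Function.LeftInverse r j)
    (hk : ∀ w ∈ P ∪ K, k w.2 = (j w.2, 0)) {Φ Ψ : X × Y → G} (hΦ : Continuous Φ)
    (hΨ : Continuous Ψ) (hΦP : ∀ p : P, Φ p = j (f p : X × Y).2)
    (hΨK : ∀ q : K, Ψ q = j (f.symm q : X × Y).2) :
    ∃ F : (X × Y) ≃ₜ (X × Y), (∀ p : P, F p = f p) ∧ ∀ w, (F w).1 = g w.1 := by
  let E := (Homeomorph.refl X).prodCongr k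
  let Φ' (w : X × G) := Φ (w.1, r w.2)
  let Ψ' (w : X × G) := Ψ (w.1, r w.2)
  refine ⟨E.trans ((kleeHomeomorph g Φ' Ψ' (by fun_prop) (by fun_prop)).trans E.symm),
    fun p => ?_, fun w => rfl⟩
  have hΦp : Φ' ((p : X × Y).1, j (p : X × Y).2) = j (f p : X × Y).2 := by
    simp [Φ', hrj _, hΦP p]
  have hΨp : Ψ' (g (p : X × Y).1, j (f p : X × Y).2) = j (p : X × Y).2 := by
    simp [Ψ', hrj _, hfg p, hΨK (f p)]
  rw [Homeomorph.trans_apply, Homeomorph.trans_apply, Homeomorph.symm_apply_eq]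
  simp only [E, Homeomorph.coe_prodCongr, Prod.map, Homeomorph.refl_apply, id,
    hk _ (Or.inl p.2), hk _ (Or.inr (f p).2)]
  rw [kleeHomeomorph_apply_zero _ _ _ (by rw [hΦp, hΨp]), hΦp, hfg p]

end Klee

/-- **Lemma 2.1**: let `X` be a 0-dimensional space and `P`, `K` compact subsets of
`X × ℕ^ℕ`.  If `f : P → K` and `g : X → X` are homeomorphisms with `g ∘ π_X = π_X ∘ f`,
then `f` extends to a homeomorphism `f̃` of `X × ℕ^ℕ` such that `g ∘ π_X = π_X ∘ f̃`. -/
theorem stmt2 {X : Type u} [TopologicalSpace X] (hX : ZeroDimensional X)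
    (P K : Set (X × (ℕ → ℕ))) (hP : IsCompact P) (hK : IsCompact K)
    (f : ↥P ≃ₜ ↥K) (g : X ≃ₜ X)
    (hfg : ∀ p : P, g ((p : X × (ℕ → ℕ)).1) = (f p : X × (ℕ → ℕ)).1) :
    ∃ F : (X × (ℕ → ℕ)) ≃ₜ (X × (ℕ → ℕ)),
      (∀ p : P, F (p : X × (ℕ → ℕ)) = (f p : X × (ℕ → ℕ))) ∧
      (∀ z : X × (ℕ → ℕ), (F z).1 = g z.1) := by
  obtain ⟨k, hk⟩ := exists_homeomorph_eq_cast_zero_of_isCompact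
    ((hP.union hK).image continuous_snd)
  have hW := hX.isTopologicalBasis_isClopen.prod_isClopen (isTopologicalBasis_clopens (X := ℕ → ℕ))
  obtain ⟨Φ, hΦ, hΦP⟩ := exists_continuous_pi_extension_of_isCompact hW hP
    (fun p n => ((f p : X × (ℕ → ℕ)).2 n : ℤ)) (by fun_prop)
  obtain ⟨Ψ, hΨ, hΨK⟩ := exists_continuous_pi_extension_of_isCompact hW hK
    (fun q n => ((f.symm q : X × (ℕ → ℕ)).2 n : ℤ)) (by fun_prop)
  exact exists_homeomorph_extension_of_splitting f g hfg k
    (j := fun z n => (z n : ℤ)) (r := fun y n => (y n).toNat) (by fun_prop) (fun z => by simp)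
    (fun w hw => hk w.2 (mem_image_of_mem _ hw)) hΦ hΨ hΦP hΨK
end

section
/- Let X be a 0-dimensional space, let P, K be compact subsets of X × ℕ^ℕ, let f : P → K be a homeomorphism, and let g be an autohomeomorphism of X with g ∘ π_X = π_X ∘ f. For x ∈ P_X = π_X(P), let Φ(x) be the set of all autohomeomorphisms h of ℕ^ℕ such that f(x, c) = (g(x), h(c)) for every c with (x, c) ∈ P. Then Φ(x) is nonempty for every x ∈ P_X. -/
/-!
Fix a compact `A ⊆ ℕ^ℕ` and a continuous injection `φ : A → ℕ^ℕ`. Since every coordinate is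
bounded on the compact set `A ∪ φ(A)`, coordinatewise bijections `ℕ ≃ ℕ × ℕ` fixing `k ↦ (k, 0)`
on small `k` give a homeomorphism `θ : ℕ^ℕ ≃ ℕ^ℕ × ℕ^ℕ` with `θ y = (y, 0)` on `A ∪ φ(A)`.
Retractions of `ℕ^ℕ` onto closed sets extend `φ` and `φ⁻¹` to continuous maps `ψ, χ` on `ℕ^ℕ`.
With `σ_w` the coordinatewise transposition of `0` and `w`, the shears `(y, v) ↦ (y, σ_{ψ y} v)`
and `(y, v) ↦ (y, σ_{χ y} v)` are involutive homeomorphisms, and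
`(a, 0) ↦ (a, φ a) ↦ (φ a, a) ↦ (φ a, 0)`; conjugating by `θ` gives a homeomorphism extending `φ`.
The theorem applies this to `c ↦ (f (x, c)).2` on the fibre of `P` over `x`, which is compact
because `X` is Hausdorff.
-/

open Topology Set

open Function

lemma exists_equiv_eqOn_of_finite {α β : Type*} [Infinite α] [Infinite β] [Countable α]
    [Countable β] {s : Set α} (hs : s.Finite) {f : α → β} (hf : InjOn f s) :
    ∃ e : α ≃ β, ∀ a ∈ s, e a = f a := by
  classical
  have : Infinite ↥sᶜ := hs.infinite_compl.to_subtype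
  have : Infinite ↥(f '' s)ᶜ := (hs.image f).infinite_compl.to_subtype
  obtain ⟨ε⟩ : Nonempty (↥sᶜ ≃ ↥(f '' s)ᶜ) := nonempty_equiv_of_countable
  refine ⟨(Equiv.Set.sumCompl s).symm.trans
    (((Equiv.Set.imageOfInjOn f s hf).sumCongr ε).trans (Equiv.Set.sumCompl _)), fun a ha => ?_⟩
  simp only [Equiv.trans_apply, Equiv.Set.sumCompl_symm_apply_of_mem ha, Equiv.sumCongr_apply,
    Sum.map_inl, Equiv.Set.sumCompl_apply_inl]
  rfl

def Homeomorph.arrowProdHomeomorphProdArrow (ι Y Z : Type*) [TopologicalSpace Y]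
    [TopologicalSpace Z] : (ι → Y × Z) ≃ₜ (ι → Y) × (ι → Z) where
  toEquiv := Equiv.arrowProdEquivProdArrow ι (fun _ => Y) (fun _ => Z)
  continuous_toFun := by
    simp only [Equiv.arrowProdEquivProdArrow]
    fun_prop
  continuous_invFun := by
    simp only [Equiv.arrowProdEquivProdArrow]
    fun_prop

section PiSwap

variable {ι α : Type*} [DecidableEq α]

def piSwap (u w : ι → α) : (ι → α) ≃ (ι → α) :=
  Equiv.piCongrRight fun i => Equiv.swap (u i) (w i)

lemma piSwap_apply_left (u w : ι → α) : piSwap u w u = w :=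
  funext fun i => Equiv.swap_apply_left (u i) (w i)

lemma piSwap_apply_right (u w : ι → α) : piSwap u w w = u :=
  funext fun i => Equiv.swap_apply_right (u i) (w i)

lemma piSwap_piSwap (u w v : ι → α) : piSwap u w (piSwap u w v) = v :=
  funext fun i => Equiv.swap_apply_self (u i) (w i) (v i)

variable [TopologicalSpace α] [DiscreteTopology α]

lemma continuous_piSwap_apply :
    Continuous fun q : (ι → α) × (ι → α) × (ι → α) => piSwap q.1 q.2.1 q.2.2 := by
  refine continuous_pi fun i => ?_
  have : Continuous fun q : (ι → α) × (ι → α) × (ι → α) => (q.1 i, q.2.1 i, q.2.2 i) := by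
    fun_prop
  exact (continuous_of_discreteTopology (f := fun t : α × α × α => Equiv.swap t.1 t.2.1 t.2.2)).comp
    this

variable {Y : Type*} [TopologicalSpace Y]

def Homeomorph.swapShear (u : ι → α) (ψ : C(Y, ι → α)) : Y × (ι → α) ≃ₜ Y × (ι → α) where
  toFun q := (q.1, piSwap u (ψ q.1) q.2)
  invFun q := (q.1, piSwap u (ψ q.1) q.2)
  left_inv q := by simp [piSwap_piSwap]
  right_inv q := by simp [piSwap_piSwap]
  continuous_toFun := continuous_fst.prodMk <| continuous_piSwap_apply.comp <|
    continuous_const.prodMk <| (ψ.continuous.comp continuous_fst).prodMk continuous_snd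
  continuous_invFun := continuous_fst.prodMk <| continuous_piSwap_apply.comp <|
    continuous_const.prodMk <| (ψ.continuous.comp continuous_fst).prodMk continuous_snd

lemma Homeomorph.swapShear_apply (u : ι → α) (ψ : C(Y, ι → α)) (y : Y) (v : ι → α) :
    swapShear u ψ (y, v) = (y, piSwap u (ψ y) v) :=
  rfl

end PiSwap

lemma PiNat.exists_continuousMap_extend_of_isClosed {E : ℕ → Type*}
    [∀ n, TopologicalSpace (E n)] [∀ n, DiscreteTopology (E n)] {Z : Type*} [TopologicalSpace Z]
    [Nonempty Z] {s : Set (∀ n, E n)} (hs : IsClosed s) (φ : C(s, Z)) :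
    ∃ ψ : C(∀ n, E n, Z), ∀ a : s, ψ a = φ a := by
  rcases s.eq_empty_or_nonempty with rfl | hne
  · exact ⟨ContinuousMap.const _ (Classical.arbitrary Z), fun a => a.2.elim⟩
  obtain ⟨r, hr, -, hrc⟩ := PiNat.exists_retraction_subtype_of_isClosed hs hne
  exact ⟨φ.comp ⟨r, hrc⟩, fun a => congrArg φ (hr a)⟩

lemma exists_homeomorph_prod_eq_zero_of_isCompact {D : Set (ℕ → ℕ)} (hD : IsCompact D) :
    ∃ θ : (ℕ → ℕ) ≃ₜ (ℕ → ℕ) × (ℕ → ℕ), ∀ y ∈ D, θ y = (y, 0) := by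
  choose b hb using fun n => (hD.image (continuous_apply n)).bddAbove
  choose e he using fun n =>
    exists_equiv_eqOn_of_finite (finite_Iic (b n)) (Prod.mk_left_injective 0).injOn
  refine ⟨(Homeomorph.piCongrRight fun n => (e n).toHomeomorphOfDiscrete).trans
    (Homeomorph.arrowProdHomeomorphProdArrow ℕ ℕ ℕ), fun y hy => ?_⟩
  have hey : ∀ n, e n (y n) = (y n, 0) := fun n => he n _ (hb n (mem_image_of_mem _ hy))
  ext n <;> simp [Homeomorph.arrowProdHomeomorphProdArrow, Equiv.arrowProdEquivProdArrow,
    Equiv.toHomeomorphOfDiscrete, hey]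

theorem exists_homeomorph_extend_of_isCompact {A : Set (ℕ → ℕ)} (hA : IsCompact A)
    (φ : C(A, ℕ → ℕ)) (hφ : Injective φ) : ∃ h : (ℕ → ℕ) ≃ₜ (ℕ → ℕ), ∀ a : A, h a = φ a := by
  have : CompactSpace A := isCompact_iff_compactSpace.mp hA
  have hB : IsCompact (range φ) := isCompact_range φ.continuous
  let φ' : A ≃ₜ range φ := (φ.continuous.isClosedEmbedding hφ).isEmbedding.toHomeomorph
  obtain ⟨ψ, hψ⟩ := PiNat.exists_continuousMap_extend_of_isClosed hA.isClosed φ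
  obtain ⟨χ, hχ⟩ := PiNat.exists_continuousMap_extend_of_isClosed hB.isClosed
    ((⟨Subtype.val, continuous_subtype_val⟩ : C(A, ℕ → ℕ)).comp (φ'.symm : C(range φ, A)))
  obtain ⟨θ, hθ⟩ := exists_homeomorph_prod_eq_zero_of_isCompact (hA.union hB)
  refine ⟨θ.trans (((Homeomorph.swapShear 0 ψ).trans ((Homeomorph.prodComm _ _).trans
    (Homeomorph.swapShear 0 χ))).trans θ.symm), fun a => ?_⟩
  have hχφ : χ (φ a) = a :=
    (hχ ⟨φ a, mem_range_self a⟩).trans (congrArg Subtype.val (φ'.symm_apply_eq.mpr rfl))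
  simp [θ.symm_apply_eq, hθ _ (Or.inl a.2), hθ _ (Or.inr (mem_range_self a)),
    Homeomorph.swapShear_apply, hψ, hχφ, piSwap_apply_left, piSwap_apply_right]

lemma IsCompact.preimage_prodMk_left {X Y : Type*} [TopologicalSpace X] [TopologicalSpace Y]
    [T1Space X] {P : Set (X × Y)} (hP : IsCompact P) (x : X) : IsCompact (Prod.mk x ⁻¹' P) :=
  (IsClosedEmbedding.of_continuous_injective_isClosedMap (by fun_prop)
    (Prod.mk_right_injective x) (isClosedMap_prodMk_left x)).isCompact_preimage hP

lemma ZeroDimensional.t2Space {X : Type*} [TopologicalSpace X] (hX : ZeroDimensional X) :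
    T2Space X := by
  obtain ⟨Z, _, -, _, -, e, he, -⟩ := hX
  exact he.t2Space

theorem stmt7_general {X : Type u} [TopologicalSpace X] (hX : ZeroDimensional X)
    (P K : Set (X × (ℕ → ℕ))) (hP : IsCompact P)
    (f : ↥P ≃ₜ ↥K) (g : X ≃ₜ X)
    (hfg : ∀ p : P, g ((p : X × (ℕ → ℕ)).1) = (f p : X × (ℕ → ℕ)).1)
    (x : X) :
    ∃ h : (ℕ → ℕ) ≃ₜ (ℕ → ℕ), ∀ (c : ℕ → ℕ) (hc : (x, c) ∈ P),
      (f ⟨(x, c), hc⟩ : X × (ℕ → ℕ)) = (g x, h c) := by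
  have := hX.t2Space
  let φ : C(Prod.mk x ⁻¹' P, ℕ → ℕ) := ⟨fun c => (f ⟨(x, c), c.2⟩ : X × (ℕ → ℕ)).2, by fun_prop⟩
  have hφ : Injective φ := fun c c' hcc' => by
    have hf : f ⟨(x, c), c.2⟩ = f ⟨(x, c'), c'.2⟩ :=
      Subtype.ext (Prod.ext ((hfg ⟨(x, c), c.2⟩).symm.trans (hfg ⟨(x, c'), c'.2⟩)) hcc')
    exact Subtype.ext (congrArg (Prod.snd ∘ Subtype.val) (f.injective hf))
  obtain ⟨h, hh⟩ := exists_homeomorph_extend_of_isCompact (hP.preimage_prodMk_left x) φ hφ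
  exact ⟨h, fun c hc => Prod.ext (hfg ⟨(x, c), hc⟩).symm (hh ⟨c, hc⟩).symm⟩

/-- In the setting of Lemma 2.1: for every `x ∈ P_X = π_X(P)`, the set `Φ(x)` of
autohomeomorphisms `h` of `ℕ^ℕ` with `f(x,c) = (g(x), h(c))` for all `c` with
`(x,c) ∈ P` is nonempty. -/
theorem stmt7 {X : Type u} [TopologicalSpace X] (hX : ZeroDimensional X)
    (P K : Set (X × (ℕ → ℕ))) (hP : IsCompact P) (hK : IsCompact K)
    (f : ↥P ≃ₜ ↥K) (g : X ≃ₜ X)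
    (hfg : ∀ p : P, g ((p : X × (ℕ → ℕ)).1) = (f p : X × (ℕ → ℕ)).1)
    (x : X) (hx : x ∈ Prod.fst '' P) :
    ∃ h : (ℕ → ℕ) ≃ₜ (ℕ → ℕ), ∀ (c : ℕ → ℕ) (hc : (x, c) ∈ P),
      (f ⟨(x, c), hc⟩ : X × (ℕ → ℕ)) = (g x, h c) :=
  stmt7_general hX P K hP f g hfg x
end

section
/- Let Y be a Tychonoff space, A an index set, P and K compact subsets of Y × ℕ^A, and f : P → K a homeomorphism with π₁|P = π₁ ∘ f, where π₁ : Y × ℕ^A → Y is the projection. If {B_i : i ∈ I} is a family of f-admissible subsets of A, then the union B = ⋃_{i ∈ I} B_i is f-admissible. -/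
open Topology Set

/-- The natural projection `p_B : Y × ℕ^A → Y × ℕ^B` for `B ⊆ A`. -/
def projTo {Y : Type u} {A : Type v} (B : Set A) (z : Y × (A → ℕ)) : Y × (B → ℕ) :=
  (z.1, fun b => z.2 b)

/-- A set `B ⊆ A` is *`f`-admissible* if there is a homeomorphism
`f_B : P_B → K_B` (where `P_B = p_B(P)`, `K_B = p_B(K)`) such that
`(f_B ∘ p_B)|P = p_B ∘ f` and `_Bπ₁|P_B = _Bπ₁ ∘ f_B`. -/
def FAdmissible {Y : Type u} {A : Type v} [TopologicalSpace Y]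
    (P K : Set (Y × (A → ℕ))) (f : ↥P ≃ₜ ↥K) (B : Set A) : Prop :=
  ∃ fB : ↥(projTo B '' P) ≃ₜ ↥(projTo B '' K),
    (∀ p : P, (fB ⟨projTo B (p : Y × (A → ℕ)), mem_image_of_mem _ p.2⟩ : Y × (B → ℕ))
        = projTo B (f p : Y × (A → ℕ))) ∧
    (∀ q : ↥(projTo B '' P), ((fB q : Y × (B → ℕ)).1 = (q : Y × (B → ℕ)).1))

theorem projTo_continuous {Y : Type u} {A : Type v} [TopologicalSpace Y] (B : Set A) :
    Continuous (projTo (Y := Y) B) :=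
  continuous_fst.prodMk (continuous_pi fun b => (continuous_apply b.1).comp continuous_snd)

/-- Any union of `f`-admissible subsets of `A` is `f`-admissible. -/
theorem stmt12 {Y : Type u} [TopologicalSpace Y] [T35Space Y] {A : Type v}
    (P K : Set (Y × (A → ℕ))) (hP : IsCompact P) (hK : IsCompact K)
    (f : ↥P ≃ₜ ↥K) (hf : ∀ p : P, ((p : Y × (A → ℕ)).1 = (f p : Y × (A → ℕ)).1))
    {I : Type w} (B : I → Set A) (hB : ∀ i, FAdmissible P K f (B i)) :
    FAdmissible P K f (⋃ i, B i) := by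
  classical
  set Bu : Set A := ⋃ i, B i with hBuDef
  -- forward well-definedness
  have key : ∀ p p' : P, projTo Bu (p : Y × (A → ℕ)) = projTo Bu (p' : Y × (A → ℕ)) →
      projTo Bu (f p : Y × (A → ℕ)) = projTo Bu (f p' : Y × (A → ℕ)) := by
    intro p p' h
    have h1 : (p : Y × (A → ℕ)).1 = (p' : Y × (A → ℕ)).1 := congrArg (Prod.fst (α := Y) (β := (Bu → ℕ))) h
    refine Prod.ext ?_ ?_
    · show (f p : Y × (A → ℕ)).1 = (f p' : Y × (A → ℕ)).1
      rw [← hf p, ← hf p']; exact h1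
    · funext b
      obtain ⟨i, hbi⟩ := mem_iUnion.mp b.2
      obtain ⟨fBi, hcomm, -⟩ := hB i
      have hi : projTo (B i) (p : Y × (A → ℕ)) = projTo (B i) (p' : Y × (A → ℕ)) := by
        refine Prod.ext h1 (funext fun a => ?_)
        exact congrFun (congrArg Prod.snd h) ⟨a.1, mem_iUnion.mpr ⟨i, a.2⟩⟩
      have heq : projTo (B i) (f p : Y × (A → ℕ)) = projTo (B i) (f p' : Y × (A → ℕ)) := by
        have hsub : (⟨projTo (B i) (p : Y × (A → ℕ)), mem_image_of_mem _ p.2⟩ :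
            ↥(projTo (B i) '' P)) = ⟨projTo (B i) (p' : Y × (A → ℕ)), mem_image_of_mem _ p'.2⟩ :=
          Subtype.ext hi
        rw [← hcomm p, ← hcomm p', hsub]
      exact congrFun (congrArg Prod.snd heq) ⟨b.1, hbi⟩
  -- backward well-definedness
  have keyInv : ∀ p p' : P, projTo Bu (f p : Y × (A → ℕ)) = projTo Bu (f p' : Y × (A → ℕ)) →
      projTo Bu (p : Y × (A → ℕ)) = projTo Bu (p' : Y × (A → ℕ)) := by
    intro p p' h
    have h1 : (f p : Y × (A → ℕ)).1 = (f p' : Y × (A → ℕ)).1 := congrArg (Prod.fst (α := Y) (β := (Bu → ℕ))) h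
    refine Prod.ext ?_ ?_
    · show (p : Y × (A → ℕ)).1 = (p' : Y × (A → ℕ)).1
      rw [hf p, hf p']; exact h1
    · funext b
      obtain ⟨i, hbi⟩ := mem_iUnion.mp b.2
      obtain ⟨fBi, hcomm, -⟩ := hB i
      have hi : projTo (B i) (f p : Y × (A → ℕ)) = projTo (B i) (f p' : Y × (A → ℕ)) := by
        refine Prod.ext h1 (funext fun a => ?_)
        exact congrFun (congrArg Prod.snd h) ⟨a.1, mem_iUnion.mpr ⟨i, a.2⟩⟩
      have heq : (⟨projTo (B i) (p : Y × (A → ℕ)), mem_image_of_mem _ p.2⟩ :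
            ↥(projTo (B i) '' P)) = ⟨projTo (B i) (p' : Y × (A → ℕ)), mem_image_of_mem _ p'.2⟩ :=
        fBi.injective (Subtype.ext (by rw [hcomm p, hcomm p']; exact hi))
      have heq' : projTo (B i) (p : Y × (A → ℕ)) = projTo (B i) (p' : Y × (A → ℕ)) :=
        congrArg Subtype.val heq
      exact congrFun (congrArg Prod.snd heq') ⟨b.1, hbi⟩
  -- sections of the projections
  have hsurjP : ∀ q : ↥(projTo Bu '' P), ∃ p : P, projTo Bu (p : Y × (A → ℕ)) = (q : Y × (Bu → ℕ)) := by
    rintro ⟨q, p, hp, rfl⟩; exact ⟨⟨p, hp⟩, rfl⟩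
  choose σ hσ using hsurjP
  have hsurjK : ∀ q : ↥(projTo Bu '' K), ∃ k : K, projTo Bu (k : Y × (A → ℕ)) = (q : Y × (Bu → ℕ)) := by
    rintro ⟨q, k, hk, rfl⟩; exact ⟨⟨k, hk⟩, rfl⟩
  choose τ hτ using hsurjK
  -- the candidate map and its inverse
  set g : ↥(projTo Bu '' P) → ↥(projTo Bu '' K) :=
    fun q => ⟨projTo Bu (f (σ q) : Y × (A → ℕ)), mem_image_of_mem _ (f (σ q)).2⟩ with hg
  set g' : ↥(projTo Bu '' K) → ↥(projTo Bu '' P) :=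
    fun q => ⟨projTo Bu (f.symm (τ q) : Y × (A → ℕ)), mem_image_of_mem _ (f.symm (τ q)).2⟩ with hg'
  have hleft : Function.LeftInverse g' g := by
    intro q
    apply Subtype.ext
    show projTo Bu (f.symm (τ (g q)) : Y × (A → ℕ)) = (q : Y × (Bu → ℕ))
    have h1 : projTo Bu (f (f.symm (τ (g q))) : Y × (A → ℕ))
        = projTo Bu (f (σ q) : Y × (A → ℕ)) := by
      rw [f.apply_symm_apply]; exact hτ (g q)
    rw [keyInv _ _ h1]; exact hσ q
  have hright : Function.RightInverse g' g := by
    intro q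
    apply Subtype.ext
    show projTo Bu (f (σ (g' q)) : Y × (A → ℕ)) = (q : Y × (Bu → ℕ))
    have h1 : projTo Bu (σ (g' q) : Y × (A → ℕ))
        = projTo Bu (f.symm (τ q) : Y × (A → ℕ)) := hσ (g' q)
    rw [key _ _ h1, f.apply_symm_apply]; exact hτ q
  set e : ↥(projTo Bu '' P) ≃ ↥(projTo Bu '' K) := ⟨g, g', hleft, hright⟩ with he
  -- continuity of g via the quotient map
  have hcproj : Continuous (projTo (Y := Y) Bu) := projTo_continuous Bu
  set π : ↥P → ↥(projTo Bu '' P) :=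
    fun p => ⟨projTo Bu (p : Y × (A → ℕ)), mem_image_of_mem _ p.2⟩ with hπ
  have hπc : Continuous π := (hcproj.comp continuous_subtype_val).subtype_mk _
  have hπs : Function.Surjective π := by
    rintro ⟨q, p, hp, rfl⟩; exact ⟨⟨p, hp⟩, rfl⟩
  haveI : CompactSpace ↥P := isCompact_iff_compactSpace.mp hP
  have hqm : IsQuotientMap π := (hπc.isClosedMap).isQuotientMap hπc hπs
  have hgπ : g ∘ π = fun p : P =>
      (⟨projTo Bu (f p : Y × (A → ℕ)), mem_image_of_mem _ (f p).2⟩ : ↥(projTo Bu '' K)) := by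
    funext p
    apply Subtype.ext
    show projTo Bu (f (σ (π p)) : Y × (A → ℕ)) = projTo Bu (f p : Y × (A → ℕ))
    exact key _ _ (hσ (π p))
  have hgc : Continuous g := by
    rw [hqm.continuous_iff, hgπ]
    exact ((hcproj.comp continuous_subtype_val).comp f.continuous).subtype_mk _
  haveI : CompactSpace ↥(projTo Bu '' P) :=
    isCompact_iff_compactSpace.mp (hP.image hcproj)
  have hec : Continuous e := hgc
  refine ⟨hec.homeoOfEquivCompactToT2, ?_, ?_⟩
  · intro p
    show ((g ⟨projTo Bu (p : Y × (A → ℕ)), mem_image_of_mem _ p.2⟩ : ↥(projTo Bu '' K)) :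
        Y × (Bu → ℕ)) = projTo Bu (f p : Y × (A → ℕ))
    exact congrArg Subtype.val (congrFun hgπ p)
  · intro q
    show (projTo Bu (f (σ q) : Y × (A → ℕ))).1 = (q : Y × (Bu → ℕ)).1
    have : (projTo Bu (f (σ q) : Y × (A → ℕ))).1 = (f (σ q) : Y × (A → ℕ)).1 := rfl
    rw [this, ← hf (σ q)]
    exact congrArg Prod.fst (hσ q)
end
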